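/- Let G be the path graph P_3 with consecutive vertices x, v_1, v_2 and weight function ω. Then for every t ≥ 1, π_t(G_ω, x) = t · ω(xv_1) · ω(v_1v_2). -/

import Mathlib

/-!
The potential `Φ(p) = ω(xv₁) ω(v₁v₂) p(x) + ω(v₁v₂) p(v₁) + p(v₂)` never increases under a
pebbling move, so starting with all `m` pebbles on `v₂` one reaches at most `m / (ω(xv₁) ω(v₁v₂))`
pebbles on `x`. Conversely, moving greedily as many pebbles as possible from `v₂` to `v₁` and then
from `v₁` to `x` loses less than one pebble at `x` with respect to this bound, so every
distribution of size `t ω(xv₁) ω(v₁v₂)` reaches `t` pebbles on `x`.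
-/

open Finset

variable {V : Type*}

/-- Applying the pebbling move `m = (v, u)` on `G_ω`: remove `ω v u` pebbles at `v`
and add one pebble at `u`. -/
def moveFn [DecidableEq V] (ω : V → V → ℕ) (m : V × V) (p : V → ℤ) : V → ℤ :=
  fun w => if w = m.1 then p m.1 - ω m.1 m.2 else if w = m.2 then p m.2 + 1 else p w

/-- The pebble function obtained after applying a sequence of pebbling moves. -/
def applyList [DecidableEq V] (ω : V → V → ℕ) : List (V × V) → (V → ℤ) → (V → ℤ)
  | [], p => p
  | m :: l, p => applyList ω l (moveFn ω m p)

/-- A pebbling sequence is executable from `p` if every move is along an edge of `G`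
and every intermediate pebble function is nonnegative. -/
def Executable [DecidableEq V] (G : SimpleGraph V) (ω : V → V → ℕ) :
    (V → ℤ) → List (V × V) → Prop
  | _, [] => True
  | p, m :: l => G.Adj m.1 m.2 ∧ (∀ w, 0 ≤ moveFn ω m p w) ∧ Executable G ω (moveFn ω m p) l

/-- `x` is `t`-reachable from `p` on the weighted graph `G_ω`. -/
def Reaches [DecidableEq V] (G : SimpleGraph V) (ω : V → V → ℕ) (p : V → ℤ) (x : V)
    (t : ℕ) : Prop :=
  ∃ l : List (V × V), Executable G ω p l ∧ (t : ℤ) ≤ applyList ω l p x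

/-- A pebble distribution is a nonnegative pebble function. -/
def IsDistrib (p : V → ℤ) : Prop := ∀ v, 0 ≤ p v

/-- The size of a pebble distribution: the total number of pebbles. -/
def size [Fintype V] (p : V → ℤ) : ℤ := ∑ v, p v

/-- The `t`-pebbling number `π_t(G_ω, x)`: the least `m` such that `x` is `t`-reachable
from every pebble distribution of size `m`. -/
noncomputable def piT [Fintype V] [DecidableEq V] (G : SimpleGraph V) (ω : V → V → ℕ)
    (x : V) (t : ℕ) : ℕ :=
  sInf {m : ℕ | ∀ p : V → ℤ, IsDistrib p → size p = (m : ℤ) → Reaches G ω p x t}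

/-- `p_S` for a multiset `S` of pebbling moves:
`p_S(w) = p(w) + d⁻(w) − ∑ ω(w,u)` over arcs leaving `w`. -/
def applyMS [DecidableEq V] (ω : V → V → ℕ) (S : Multiset (V × V)) (p : V → ℤ) : V → ℤ :=
  fun w => p w + (Multiset.card (S.filter (fun m => m.2 = w)) : ℤ)
    - ((S.filter (fun m => m.1 = w)).map (fun m => (ω m.1 m.2 : ℤ))).sum

/-- The transition digraph of `S` contains a directed cycle. -/
def HasCycle (S : Multiset (V × V)) : Prop :=
  ∃ l : List (V × V), l ≠ [] ∧ (l : Multiset (V × V)) ≤ S ∧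
    List.Chain' (fun a b => a.2 = b.1) l ∧
    l.getLast?.map Prod.snd = l.head?.map Prod.fst

/-- A multiset of pebbling moves is acyclic if its transition digraph has no directed cycle. -/
def Acyclic (S : Multiset (V × V)) : Prop := ¬HasCycle S

/-- A list of pebbling moves is regular if each move is an initial move of the multiset of
remaining moves: the source of each move has in-degree zero among the remaining moves. -/
def RegularSeq : List (V × V) → Prop
  | [] => True
  | m :: l => (∀ m' ∈ m :: l, m'.2 ≠ m.1) ∧ RegularSeq l

/-- The path graph `P_3` with consecutive vertices `0, 1, 2`. -/
def P3 : SimpleGraph (Fin 3) :=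
  SimpleGraph.fromRel (fun a b => b.val = a.val + 1)

section Pebbling

variable [DecidableEq V] {G : SimpleGraph V} (ω : V → V → ℕ)

lemma applyList_append (l₁ l₂ : List (V × V)) (p : V → ℤ) :
    applyList ω (l₁ ++ l₂) p = applyList ω l₂ (applyList ω l₁ p) := by
  induction l₁ generalizing p with
  | nil => rfl
  | cons m l ih => exact ih _

lemma Executable.append {l₁ l₂ : List (V × V)} {p : V → ℤ} (h₁ : Executable G ω p l₁)
    (h₂ : Executable G ω (applyList ω l₁ p) l₂) : Executable G ω p (l₁ ++ l₂) := by
  induction l₁ generalizing p with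
  | nil => exact h₂
  | cons m l ih => exact ⟨h₁.1, h₁.2.1, ih h₁.2.2 h₂⟩

lemma Executable.isDistrib_applyList {l : List (V × V)} {p : V → ℤ}
    (h : Executable G ω p l) (hp : IsDistrib p) : IsDistrib (applyList ω l p) := by
  induction l generalizing p with
  | nil => exact hp
  | cons m l ih => exact ih h.2.2 h.2.1

lemma Executable.potential_le {Φ : (V → ℤ) → ℤ}
    (hΦ : ∀ m p, G.Adj m.1 m.2 → Φ (moveFn ω m p) ≤ Φ p) {l : List (V × V)} {p : V → ℤ}
    (h : Executable G ω p l) : Φ (applyList ω l p) ≤ Φ p := by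
  induction l generalizing p with
  | nil => exact le_rfl
  | cons m l ih => exact (ih h.2.2).trans (hΦ m p h.1)

lemma applyList_replicate {v u : V} (hvu : v ≠ u) (n : ℕ) (p : V → ℤ) :
    applyList ω (List.replicate n (v, u)) p =
      fun w => if w = v then p v - n * ω v u else if w = u then p u + n else p w := by
  induction n generalizing p with
  | zero => funext w; split_ifs <;> simp_all [applyList]
  | succ n ih =>
    rw [List.replicate_succ, applyList, ih]
    funext w
    by_cases hwv : w = v
    · subst hwv; simp only [moveFn, ↓reduceIte, Nat.cast_add, Nat.cast_one]; ring
    · by_cases hwu : w = u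
      · subst hwu; simp only [moveFn, hwv, ↓reduceIte, Nat.cast_add, Nat.cast_one]; ring
      · simp [moveFn, hwv, hwu]

lemma executable_replicate {v u : V} (hvu : G.Adj v u) {n : ℕ} {p : V → ℤ} (hp : IsDistrib p)
    (hn : n * ω v u ≤ p v) : Executable G ω p (List.replicate n (v, u)) := by
  induction n generalizing p with
  | zero => trivial
  | succ n ih =>
    have hmove : IsDistrib (moveFn ω (v, u) p) := by
      intro w
      simp only [moveFn]
      split_ifs with hwv
      · subst hwv; push_cast at hn; nlinarith [Nat.cast_nonneg (α := ℤ) n]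
      · linarith [hp u]
      · exact hp w
    refine ⟨hvu, hmove, ih hmove ?_⟩
    simp only [moveFn, if_true]
    push_cast at hn
    linarith

lemma exists_executable_transfer {v u : V} (hvu : G.Adj v u) {p : V → ℤ} (hp : IsDistrib p) :
    ∃ l, Executable G ω p l ∧ applyList ω l p =
      fun w => if w = v then p v % ω v u else if w = u then p u + p v / ω v u else p w := by
  set n := (p v / ω v u).toNat
  have hn : (n : ℤ) = p v / ω v u :=
    Int.toNat_of_nonneg (Int.ediv_nonneg (hp v) (Nat.cast_nonneg _))
  refine ⟨List.replicate n (v, u), executable_replicate ω hvu hp ?_, ?_⟩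
  · have := Int.Nonneg.mod (p v) (ω v u) (hp v)
    rw [Int.emod_def] at this
    rw [hn]
    linarith
  · rw [applyList_replicate ω (G.ne_of_adj hvu), hn, Int.emod_def, mul_comm]

end Pebbling

lemma le_add_ediv_add_ediv {a b c A B t : ℤ} (ha : 0 ≤ a) (hb : 0 ≤ b) (hA : 0 < A)
    (hB : 0 < B) (hsum : a + b + c = t * A * B) : t ≤ a + (b + c / B) / A := by
  suffices t - a ≤ (b + c / B) / A by linarith
  rw [Int.le_ediv_iff_mul_le hA, ← sub_le_iff_le_add', Int.le_ediv_iff_mul_le hB]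
  nlinarith [mul_nonneg ha (by nlinarith : (0 : ℤ) ≤ A * B - 1),
    mul_nonneg hb (by linarith : (0 : ℤ) ≤ B - 1)]

namespace P3

lemma adj_iff (u v : Fin 3) :
    P3.Adj u v ↔ (u = 0 ∧ v = 1) ∨ (u = 1 ∧ v = 0) ∨ (u = 1 ∧ v = 2) ∨ (u = 2 ∧ v = 1) := by
  fin_cases u <;> fin_cases v <;> simp [P3]

lemma adj_zero_one : P3.Adj 0 1 := by simp [adj_iff]
lemma adj_one_zero : P3.Adj 1 0 := by simp [adj_iff]
lemma adj_one_two : P3.Adj 1 2 := by simp [adj_iff]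
lemma adj_two_one : P3.Adj 2 1 := by simp [adj_iff]

variable (ω : Fin 3 → Fin 3 → ℕ)

def potential (p : Fin 3 → ℤ) : ℤ := ω 0 1 * ω 1 2 * p 0 + ω 1 2 * p 1 + p 2

variable {ω}

lemma potential_moveFn_le (hsym : ∀ u v, ω u v = ω v u) (hpos : ∀ u v, P3.Adj u v → 0 < ω u v)
    (m : Fin 3 × Fin 3) (p : Fin 3 → ℤ) (hm : P3.Adj m.1 m.2) :
    potential ω (moveFn ω m p) ≤ potential ω p := by
  have hA : (1 : ℤ) ≤ ω 0 1 := by exact_mod_cast hpos 0 1 adj_zero_one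
  have hB : (1 : ℤ) ≤ ω 1 2 := by exact_mod_cast hpos 1 2 adj_one_two
  obtain ⟨v, u⟩ := m
  rcases (adj_iff v u).1 hm with ⟨rfl, rfl⟩ | ⟨rfl, rfl⟩ | ⟨rfl, rfl⟩ | ⟨rfl, rfl⟩ <;>
    simp only [potential, moveFn, Fin.isValue, ↓reduceIte, Fin.reduceEq, one_ne_zero,
      zero_ne_one, hsym 1 0, hsym 2 1] <;>
    nlinarith [mul_le_mul hA hA zero_le_one (by linarith)]

lemma mul_le_potential_of_reaches (hsym : ∀ u v, ω u v = ω v u)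
    (hpos : ∀ u v, P3.Adj u v → 0 < ω u v) {p : Fin 3 → ℤ} (hp : IsDistrib p) {t : ℕ}
    (h : Reaches P3 ω p 0 t) : t * ω 0 1 * ω 1 2 ≤ potential ω p := by
  obtain ⟨l, hl, ht⟩ := h
  have hfinal := hl.isDistrib_applyList ω hp
  calc (t : ℤ) * ω 0 1 * ω 1 2 = ω 0 1 * ω 1 2 * t := by ring
    _ ≤ ω 0 1 * ω 1 2 * applyList ω l p 0 := by gcongr
    _ ≤ potential ω (applyList ω l p) := by
        unfold potential; nlinarith [hfinal 1, hfinal 2]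
    _ ≤ potential ω p := hl.potential_le ω (potential_moveFn_le hsym hpos)

lemma reaches_of_size_eq (hsym : ∀ u v, ω u v = ω v u) (hpos : ∀ u v, P3.Adj u v → 0 < ω u v)
    {p : Fin 3 → ℤ} (hp : IsDistrib p) {t : ℕ} (hsize : size p = t * ω 0 1 * ω 1 2) :
    Reaches P3 ω p 0 t := by
  obtain ⟨l₁, hl₁, hp₁⟩ := exists_executable_transfer ω adj_two_one hp
  have hq : IsDistrib (applyList ω l₁ p) := hl₁.isDistrib_applyList ω hp
  obtain ⟨l₂, hl₂, hp₂⟩ := exists_executable_transfer ω adj_one_zero hq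
  refine ⟨l₁ ++ l₂, hl₁.append ω hl₂, ?_⟩
  rw [applyList_append, hp₂, hp₁]
  simp only [Fin.reduceEq, if_false, if_true, hsym 2 1, hsym 1 0]
  rw [size, Fin.sum_univ_three] at hsize
  exact le_add_ediv_add_ediv (hp 0) (hp 1) (by exact_mod_cast hpos 0 1 adj_zero_one)
    (by exact_mod_cast hpos 1 2 adj_one_two) hsize

end P3

/-- For the weighted path `P_3` with consecutive vertices
`x = 0, v_1 = 1, v_2 = 2`: `π_t(G_ω, x) = t · ω(x v_1) · ω(v_1 v_2)` for all `t ≥ 1`. -/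
theorem statement7 (ω : Fin 3 → Fin 3 → ℕ)
    (hsym : ∀ u v, ω u v = ω v u)
    (hω : ∀ u v, P3.Adj u v → 2 ≤ ω u v) :
    ∀ t : ℕ, 1 ≤ t → piT P3 ω 0 t = t * ω 0 1 * ω 1 2 := by
  intro t _
  have hpos : ∀ u v, P3.Adj u v → 0 < ω u v := fun u v h => two_pos.trans_le (hω u v h)
  refine IsLeast.csInf_eq ⟨fun p hp hsize => ?_, fun m hm => ?_⟩
  · exact P3.reaches_of_size_eq hsym hpos hp (by exact_mod_cast hsize)
  · have hsingle : IsDistrib (Pi.single (2 : Fin 3) (m : ℤ)) := by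
      intro v; rw [Pi.single_apply]; split_ifs <;> positivity
    have hsize : size (Pi.single (2 : Fin 3) (m : ℤ)) = m := by simp [size]
    have := P3.mul_le_potential_of_reaches hsym hpos hsingle (hm _ hsingle hsize)
    simp only [P3.potential, Pi.single_apply, Fin.reduceEq, if_false, if_true] at this
    zify
    linarith
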